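/- arXiv:2411.07083 — 9 statements merged into one kernel-verified Lean document; each statement's English description precedes it below -/
import Mathlib

section
/- Let q, r ≥ 2 be real numbers and let p > 0 be a real number with p² + q² + r² - pqr ≤ 4. Then p ≥ 2. -/
theorem stmt_3 (p q r : ℝ) (hq : 2 ≤ q) (hr : 2 ≤ r) (hp : 0 < p)
    (hC : p ^ 2 + q ^ 2 + r ^ 2 - p * q * r ≤ 4) : 2 ≤ p := by
  by_contra h
  push_neg at h
  have hqr : p + 2 < q * r := by nlinarith
  nlinarith [sq_nonneg (q - r), mul_pos (by linarith : (0:ℝ) < 2 - p) (by linarith : (0:ℝ) < q * r - p - 2)]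
end

section
/- Let S = (p,q,r) be a triple of positive reals with 0 < r < 2, and define f_{-1} = p, f_0 = q, f_{n+1} = r·f_n - f_{n-1}. Then there exists n ≥ 0 with f_n < 0. -/
/-!
Write `r = 2 cos θ` with `0 < θ < π`. The recurrence is then solved by
`f n · sin θ = q sin (nθ) - p sin ((n - 1)θ)`, and for `m = ⌊π / θ⌋` one has
`sin (mθ) ≥ 0 > sin ((m + 1)θ)`, so `f (m + 1) < 0`.
-/

open Real

theorem exists_mem_Ioo_two_mul_cos_eq {r : ℝ} (hr₁ : -2 < r) (hr₂ : r < 2) :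
    ∃ θ ∈ Set.Ioo 0 π, r = 2 * cos θ :=
  ⟨arccos (r / 2), ⟨arccos_pos.2 (by linarith), arccos_lt_pi.2 (by linarith)⟩,
    by rw [cos_arccos (by linarith) (by linarith)]; ring⟩

theorem mul_sin_eq_of_two_mul_cos_recurrence {f : ℕ → ℝ} {θ : ℝ}
    (hrec : ∀ n, f (n + 2) = 2 * cos θ * f (n + 1) - f n) (n : ℕ) :
    f n * sin θ = f 1 * sin (n * θ) - f 0 * sin ((n - 1) * θ) := by
  have sin_succ_add_sin_pred (x : ℝ) :
      sin ((x + 1) * θ) + sin ((x - 1) * θ) = 2 * cos θ * sin (x * θ) := by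
    rw [add_mul, sub_mul, one_mul, sin_add, sin_sub]; ring
  induction n using Nat.twoStepInduction with
  | zero => simp [sin_neg]
  | one => simp
  | more n ih₀ ih₁ =>
    have h₀ := sin_succ_add_sin_pred n
    have h₁ := sin_succ_add_sin_pred (n + 1)
    rw [hrec]
    push_cast at ih₁ h₁ ⊢
    rw [add_sub_cancel_right] at ih₁ h₁
    rw [show (n : ℝ) + 2 = n + 1 + 1 by ring, add_sub_cancel_right]
    linear_combination 2 * cos θ * ih₁ - ih₀ - f 1 * h₁ + f 0 * h₀

theorem exists_sin_nonneg_and_sin_succ_neg {θ : ℝ} (hθ₀ : 0 < θ) (hθπ : θ < π) :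
    ∃ m : ℕ, 0 ≤ sin (m * θ) ∧ sin ((m + 1) * θ) < 0 := by
  set m := ⌊π / θ⌋₊
  have hm_le : m * θ ≤ π := (le_div_iff₀ hθ₀).1 (Nat.floor_le (by positivity))
  have hm_lt : π < (m + 1) * θ := (div_lt_iff₀ hθ₀).1 (Nat.lt_floor_add_one _)
  refine ⟨m, sin_nonneg_of_nonneg_of_le_pi (by positivity) hm_le, ?_⟩
  rw [← sin_sub_two_pi]
  exact sin_neg_of_neg_of_neg_pi_lt (by linarith) (by linarith)

/-- `f n` corresponds to `f_{n-1}`, so `f 0 = f_{-1} = p`, `f 1 = f_0 = q`. -/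
theorem stmt_6 (p q r : ℝ) (hp : 0 < p) (hq : 0 < q) (hr0 : 0 < r) (hr2 : r < 2)
    (f : ℕ → ℝ) (hf0 : f 0 = p) (hf1 : f 1 = q)
    (hfrec : ∀ n, f (n + 2) = r * f (n + 1) - f n) :
    ∃ n, f (n + 1) < 0 := by
  obtain ⟨θ, ⟨hθ₀, hθπ⟩, rfl⟩ := exists_mem_Ioo_two_mul_cos_eq (by linarith) hr2
  obtain ⟨m, hsin_m, hsin_succ⟩ := exists_sin_nonneg_and_sin_succ_neg hθ₀ hθπ
  have hclosed := mul_sin_eq_of_two_mul_cos_recurrence hfrec (m + 1)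
  rw [hf0, hf1] at hclosed
  push_cast at hclosed
  rw [add_sub_cancel_right] at hclosed
  refine ⟨m, neg_of_mul_neg_left ?_ (sin_pos_of_pos_of_lt_pi hθ₀ hθπ).le⟩
  rw [hclosed]
  linarith [mul_neg_of_pos_of_neg hq hsin_succ, mul_nonneg hp.le hsin_m]
end

section
/- Let S = (p,q,r) with p,q positive reals and r > 2. Write r = 2cosh θ with θ > 0, and define f_{-1} = p, f_0 = q, f_{n+1} = r·f_n - f_{n-1}. If p = q·e^θ, then f_n → 0 as n → ∞. If p ≠ q·e^θ, then the sequence (f_n) does not converge. -/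
/-- `f n` corresponds to `f_{n-1}`, so `f 0 = f_{-1} = p`, `f 1 = f_0 = q`. -/
theorem stmt_7 (p q θ : ℝ) (hp : 0 < p) (hq : 0 < q) (hθ : 0 < θ)
    (r : ℝ) (hr : r = 2 * Real.cosh θ)
    (f : ℕ → ℝ) (hf0 : f 0 = p) (hf1 : f 1 = q)
    (hfrec : ∀ n, f (n + 2) = r * f (n + 1) - f n) :
    (p = q * Real.exp θ → Filter.Tendsto f Filter.atTop (nhds 0)) ∧
    (p ≠ q * Real.exp θ → ¬ ∃ L : ℝ, Filter.Tendsto f Filter.atTop (nhds L)) := by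
  set a := Real.exp θ with ha
  set b := Real.exp (-θ) with hb
  have hab : a * b = 1 := by rw [ha, hb, ← Real.exp_add]; simp
  have ha1 : 1 < a := by rw [ha]; nlinarith [Real.add_one_le_exp θ]
  have hb0 : 0 < b := Real.exp_pos _
  have hb1 : b < 1 := by
    rw [hb, Real.exp_lt_one_iff]; linarith
  have har : a + b = r := by rw [hr, Real.cosh_eq]; ring
  have hD : 0 < a - b := by linarith
  set A := (q - p * b) / (a - b) with hA_def
  set B := (p * a - q) / (a - b) with hB_def
  clear_value A B
  have key : ∀ n, f n = A * a ^ n + B * b ^ n := by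
    intro n
    induction n using Nat.twoStepInduction with
    | zero => rw [hf0, hA_def, hB_def]; field_simp; ring
    | one => rw [hf1, hA_def, hB_def]; field_simp; ring
    | more n ih1 ih2 =>
      have h1 : a ^ 2 = r * a - 1 := by rw [← har]; linear_combination -hab
      have h2 : b ^ 2 = r * b - 1 := by rw [← har]; linear_combination -hab
      rw [hfrec n, ih1, ih2]
      linear_combination (-(A * a ^ n)) * h1 + (-(B * b ^ n)) * h2
  have hlimB : Filter.Tendsto (fun n => B * b ^ n) Filter.atTop (nhds 0) := by
    have := (tendsto_pow_atTop_nhds_zero_of_lt_one hb0.le hb1).const_mul B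
    simpa using this
  constructor
  · intro hpq
    have hA : A = 0 := by
      rw [hA_def]
      have : q - p * b = 0 := by rw [hpq]; linear_combination -q * hab
      rw [this, zero_div]
    refine hlimB.congr fun n => ?_
    rw [key n, hA]; ring
  · intro hne
    rintro ⟨L, hL⟩
    have hA : A ≠ 0 := by
      intro h
      apply hne
      have hnum : q - p * b = 0 := by
        rw [hA_def, div_eq_zero_iff] at h
        rcases h with h | h
        · exact h
        · exact absurd h hD.ne'
      linear_combination (-p) * hab + (-a) * hnum
    have hAL : Filter.Tendsto (fun n => A * a ^ n) Filter.atTop (nhds (L - 0)) := by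
      refine (hL.sub hlimB).congr fun n => ?_
      rw [key n]; ring
    have hpow := tendsto_pow_atTop_atTop_of_one_lt ha1
    rcases hA.lt_or_gt with hAn | hAp
    · exact not_tendsto_nhds_of_tendsto_atBot
        (hpow.const_mul_atTop_of_neg hAn) _ hAL
    · exact not_tendsto_nhds_of_tendsto_atTop
        (hpow.const_mul_atTop hAp) _ hAL
end

section
/- Let S = (p,q,r) be a triple of positive reals with p ≥ q ≥ r. Then: (1) S ≤ γ₁(S) (coordinatewise) iff qr ≥ 2p, and in this case S ≤ γ₂(S) and S ≤ γ₃(S) as well; (2) exactly two of the three inequalities S ≤ γ_i(S) hold iff 2p² > pqr ≥ 2q²; (3) at most one of them holds iff 2q > pr. -/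
theorem stmt_10 (p q r : ℝ) (hr : 0 < r) (hqr : r ≤ q) (hpq : q ≤ p) :
    ∀ c₁ c₂ c₃ : Prop,
      (c₁ ↔ (p, q, r) ≤ (q * r - p, q, r)) →
      (c₂ ↔ (p, q, r) ≤ (p, r * p - q, r)) →
      (c₃ ↔ (p, q, r) ≤ (p, q, p * q - r)) →
      ((c₁ ↔ 2 * p ≤ q * r) ∧ (c₁ → c₂ ∧ c₃)) ∧
      (((c₁ ∧ c₂ ∧ ¬ c₃) ∨ (c₁ ∧ ¬ c₂ ∧ c₃) ∨ (¬ c₁ ∧ c₂ ∧ c₃)) ↔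
        (p * q * r < 2 * p ^ 2 ∧ 2 * q ^ 2 ≤ p * q * r)) ∧
      ((¬ (c₁ ∧ c₂) ∧ ¬ (c₁ ∧ c₃) ∧ ¬ (c₂ ∧ c₃)) ↔ p * r < 2 * q) := by
  intro c₁ c₂ c₃ h1 h2 h3
  have hq : 0 < q := lt_of_lt_of_le hr hqr
  have hp : 0 < p := lt_of_lt_of_le hq hpq
  simp only [Prod.le_def, le_refl, and_true] at h1 h2 h3
  have e1 : c₁ ↔ 2 * p ≤ q * r := by rw [h1]; constructor <;> intro h <;> linarith
  have e2 : c₂ ↔ 2 * q ≤ r * p := by rw [h2]; simp only [true_and]; constructor <;> intro h <;> linarith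
  have e3 : c₃ ↔ 2 * r ≤ p * q := by rw [h3]; simp only [true_and]; constructor <;> intro h <;> linarith
  rw [e1, e2, e3]
  refine ⟨⟨Iff.rfl, fun h => ⟨by nlinarith, by nlinarith⟩⟩, ?_, ?_⟩
  · constructor
    · rintro (⟨h1, h2, h3⟩ | ⟨h1, h2, h3⟩ | ⟨h1, h2, h3⟩)
      · exact absurd (by nlinarith) h3
      · exact absurd (by nlinarith) h2
      · push_neg at h1; constructor <;> nlinarith
    · rintro ⟨ha, hb⟩
      right; right
      refine ⟨fun h => ?_, by nlinarith, by nlinarith⟩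
      nlinarith
  · constructor
    · rintro ⟨_, _, h23⟩
      by_contra hc
      push_neg at hc
      exact h23 ⟨by nlinarith, by nlinarith⟩
    · intro h
      have n2 : ¬ (2 * q ≤ r * p) := by push_neg; nlinarith
      have n1 : ¬ (2 * p ≤ q * r) := by push_neg; nlinarith
      exact ⟨fun ⟨a, _⟩ => n1 a, fun ⟨a, _⟩ => n1 a, fun ⟨a, _⟩ => n2 a⟩
end

section
/- Let p, q, r be positive reals with pqr ≥ 2p², pqr ≥ 2q², pqr ≥ 2r² (condition (M1)). Then C(p,q,r) = p² + q² + r² - pqr ≤ 4. -/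
/-!
Order the triple so that `r ≤ q ≤ p`. Condition (M1) for the largest entry reads `2 p ≤ q r`, so
`C` is decreasing in `p` on `[q, q r / 2]` and `C(p, q, r) ≤ C(q, q, r)`; it also forces `r ≥ 2`,
so `C(q, q, r) = q² (2 - r) + r²` is decreasing in `q` and `C(q, q, r) ≤ C(r, r, r) = 3 r² - r³`.
Finally `4 - 3 r² + r³ = (r - 2)² (r + 1) ≥ 0`.
-/

def markovConst (p q r : ℝ) : ℝ := p ^ 2 + q ^ 2 + r ^ 2 - p * q * r

lemma markovConst_comm₁₂ (p q r : ℝ) : markovConst q p r = markovConst p q r := by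
  unfold markovConst; ring

lemma markovConst_comm₂₃ (p q r : ℝ) : markovConst p r q = markovConst p q r := by
  unfold markovConst; ring

lemma markovConst_le_markovConst_of_two_mul_le {p q r : ℝ} (hqp : q ≤ p) (h : 2 * p ≤ q * r) :
    markovConst p q r ≤ markovConst q q r := by
  have hdiff : markovConst p q r - markovConst q q r = (p - q) * (p + q - q * r) := by
    unfold markovConst; ring
  linarith [mul_nonpos_of_nonneg_of_nonpos (sub_nonneg.2 hqp) (by linarith : p + q - q * r ≤ 0)]

lemma markovConst_le_markovConst_of_two_le {q r : ℝ} (hr : 2 ≤ r) (hrq : r ≤ q) :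
    markovConst q q r ≤ markovConst r r r := by
  have hdiff : markovConst q q r - markovConst r r r = (q ^ 2 - r ^ 2) * (2 - r) := by
    unfold markovConst; ring
  have hsq : r ^ 2 ≤ q ^ 2 := pow_le_pow_left₀ (by linarith) hrq 2
  linarith [mul_nonpos_of_nonneg_of_nonpos (sub_nonneg.2 hsq) (by linarith : 2 - r ≤ 0)]

lemma markovConst_self_le_four {r : ℝ} (hr : -1 ≤ r) : markovConst r r r ≤ 4 := by
  have hdiff : 4 - markovConst r r r = (r - 2) ^ 2 * (r + 1) := by
    unfold markovConst; ring
  linarith [mul_nonneg (sq_nonneg (r - 2)) (by linarith : 0 ≤ r + 1)]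

lemma markovConst_le_four_of_le {p q r : ℝ} (hr : 0 < r) (hrq : r ≤ q) (hqp : q ≤ p)
    (h : 2 * p ^ 2 ≤ p * q * r) : markovConst p q r ≤ 4 := by
  have hp : 0 < p := by linarith
  have h' : 2 * p ≤ q * r := by nlinarith
  have hr2 : 2 ≤ r := by nlinarith
  calc markovConst p q r ≤ markovConst q q r := markovConst_le_markovConst_of_two_mul_le hqp h'
    _ ≤ markovConst r r r := markovConst_le_markovConst_of_two_le hr2 hrq
    _ ≤ 4 := markovConst_self_le_four (by linarith)

theorem stmt_13 (p q r : ℝ) (hp : 0 < p) (hq : 0 < q) (hr : 0 < r)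
    (h1 : 2 * p ^ 2 ≤ p * q * r) (h2 : 2 * q ^ 2 ≤ p * q * r)
    (h3 : 2 * r ^ 2 ≤ p * q * r) :
    p ^ 2 + q ^ 2 + r ^ 2 - p * q * r ≤ 4 := by
  change markovConst p q r ≤ 4
  rcases le_total q p with hqp | hpq
  · rcases le_total r q with hrq | hqr
    · exact markovConst_le_four_of_le hr hrq hqp h1
    rcases le_total r p with hrp | hpr
    · rw [← markovConst_comm₂₃]
      exact markovConst_le_four_of_le hq hqr hrp (by linarith)
    · rw [← markovConst_comm₂₃, ← markovConst_comm₁₂]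
      exact markovConst_le_four_of_le hq hqp hpr (by linarith)
  · rcases le_total r p with hrp | hpr
    · rw [← markovConst_comm₁₂]
      exact markovConst_le_four_of_le hr hrp hpq (by linarith)
    rcases le_total r q with hrq | hqr
    · rw [← markovConst_comm₁₂, ← markovConst_comm₂₃]
      exact markovConst_le_four_of_le hp hpr hrq (by linarith)
    · rw [← markovConst_comm₁₂, ← markovConst_comm₂₃, ← markovConst_comm₁₂]
      exact markovConst_le_four_of_le hp hpq hqr (by linarith)
end

section
/- Let p, q, r be positive reals with p ≥ q ≥ r and pqr ≥ 2p², pqr ≥ 2q², pqr ≥ 2r² (condition (M1)). Then C(p,q,r) = p² + q² + r² - pqr = 4 holds if and only if r = 2 and p = q. -/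
theorem stmt_15 (p q r : ℝ) (hr : 0 < r) (hqr : r ≤ q) (hpq : q ≤ p)
    (h1 : 2 * p ^ 2 ≤ p * q * r) (h2 : 2 * q ^ 2 ≤ p * q * r)
    (h3 : 2 * r ^ 2 ≤ p * q * r) :
    p ^ 2 + q ^ 2 + r ^ 2 - p * q * r = 4 ↔ r = 2 ∧ p = q := by
  have hq : 0 < q := lt_of_lt_of_le hr hqr
  have hp : 0 < p := lt_of_lt_of_le hq hpq
  have h2p : 2 * p ≤ q * r := by
    have := mul_le_mul_of_nonneg_left h1 (le_of_lt (inv_pos.mpr hp))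
    nlinarith
  have hr2 : 2 ≤ r := by nlinarith
  constructor
  · intro h
    have key : (r - 2) ^ 2 * (r + 1) ≤ 0 := by
      nlinarith [sq_nonneg (p - q), mul_nonneg (sub_nonneg.mpr hr2) (sub_nonneg.mpr hqr),
        mul_nonneg (mul_nonneg (sub_nonneg.mpr hr2) (sub_nonneg.mpr hqr)) (le_of_lt hq),
        mul_le_mul_of_nonneg_left h2p (le_of_lt hq),
        mul_nonneg (sub_nonneg.mpr hpq) (sub_nonneg.mpr hr2)]
    have hr2' : r = 2 := by nlinarith [sq_nonneg (r - 2)]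
    refine ⟨hr2', ?_⟩
    have : 2 * p ≤ 2 * q := by rw [hr2'] at h2p; linarith
    linarith
  · rintro ⟨hr2', hpq'⟩
    subst hr2' hpq'
    ring
end

section
/- Let x, y, z, x', y', z' be positive reals with xyz = x'y'z', and suppose xx' = yy' = zz' = 4. Then xyz = x'y'z' = 8, and the tuple M = ((x,y,z),(x',y',z')) is a fixed point of each map γ₁, γ₂, γ₃, where γ₁(M) = ((y'z'-x, y, z),(yz-x', y', z')) and similarly for γ₂, γ₃. Conversely, if M is fixed by all of γ₁, γ₂, γ₃ then xx' = yy' = zz' = 4. -/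
theorem stmt_16 (x y z x' y' z' : ℝ)
    (hx : 0 < x) (hy : 0 < y) (hz : 0 < z)
    (hx' : 0 < x') (hy' : 0 < y') (hz' : 0 < z')
    (hprod : x * y * z = x' * y' * z') :
    ((x * x' = 4 ∧ y * y' = 4 ∧ z * z' = 4) →
      x * y * z = 8 ∧ x' * y' * z' = 8) ∧
    ((x * x' = 4 ∧ y * y' = 4 ∧ z * z' = 4) ↔
      (y' * z' - x = x ∧ y * z - x' = x' ∧
       z' * x' - y = y ∧ z * x - y' = y' ∧
       x' * y' - z = z ∧ x * y - z' = z')) := by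
  have key : (x * x' = 4 ∧ y * y' = 4 ∧ z * z' = 4) →
      x * y * z = 8 ∧ x' * y' * z' = 8 := by
    rintro ⟨h1, h2, h3⟩
    have hsq : (x * y * z) ^ 2 = 64 := by
      have e : (x * y * z) * (x' * y' * z') = (x * x') * ((y * y') * (z * z')) := by ring
      rw [h1, h2, h3] at e
      calc (x * y * z) ^ 2 = (x * y * z) * (x' * y' * z') := by rw [hprod]; ring
        _ = 64 := by rw [e]; norm_num
    have hpos : 0 < x * y * z := by positivity
    have h8 : x * y * z = 8 := by nlinarith [hsq, hpos]
    exact ⟨h8, by linarith [hprod]⟩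
  refine ⟨key, ?_, ?_⟩
  · rintro h
    obtain ⟨h1, h2, h3⟩ := h
    obtain ⟨h8, h8'⟩ := key ⟨h1, h2, h3⟩
    refine ⟨?_, ?_, ?_, ?_, ?_, ?_⟩ <;> nlinarith [h1, h2, h3, h8, h8',
      mul_pos hx hy, mul_pos hy hz, mul_pos hz hx,
      mul_pos hx' hy', mul_pos hy' hz', mul_pos hz' hx']
  · rintro ⟨e1, e2, e3, e4, e5, e6⟩
    have f1 : y' * z' = 2 * x := by linarith
    have f2 : y * z = 2 * x' := by linarith
    have f3 : z' * x' = 2 * y := by linarith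
    have f4 : z * x = 2 * y' := by linarith
    have f5 : x' * y' = 2 * z := by linarith
    have f6 : x * y = 2 * z' := by linarith
    set a := x * x' with ha
    set b := y * y' with hb
    set c := z * z' with hc
    clear_value a b c
    have hab : a * b = 4 * c := by
      calc a * b = (x * y) * (x' * y') := by rw [ha, hb]; ring
        _ = (2 * z') * (2 * z) := by rw [f6, f5]
        _ = 4 * c := by rw [hc]; ring
    have hac : a * c = 4 * b := by
      calc a * c = (z * x) * (z' * x') := by rw [ha, hc]; ring
        _ = (2 * y') * (2 * y) := by rw [f4, f3]
        _ = 4 * b := by rw [hb]; ring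
    have hbc : b * c = 4 * a := by
      calc b * c = (y * z) * (y' * z') := by rw [hb, hc]; ring
        _ = (2 * x') * (2 * x) := by rw [f2, f1]
        _ = 4 * a := by rw [ha]; ring
    have hap : 0 < a := by rw [ha]; positivity
    have hbp : 0 < b := by rw [hb]; positivity
    have hcp : 0 < c := by rw [hc]; positivity
    clear key e1 e2 e3 e4 e5 e6 f1 f2 f3 f4 f5 f6 hprod ha hb hc
    clear hx hy hz hx' hy' hz' x y z x' y' z'
    have hbceq : b = c := by nlinarith [hab, hac, hap]
    have haa : a = 4 := by
      have h4 : a * b = 4 * b := by rw [hab, hbceq]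
      nlinarith [h4, hbp]
    have hbb : b = 4 := by nlinarith [hbc, hbceq, haa]
    have hcc : c = 4 := by rw [← hbceq]; exact hbb
    exact ⟨haa, hbb, hcc⟩
end

section
/- For every integer n ≤ 4, the triple S = (√(5(5-n)), 2√(5-n), √5) has all squares p², q², r² integral, product pqr = 10(5-n) integral, satisfies p, q, r ≥ 2 and C(S) = p² + q² + r² - pqr = n. Hence the Markov constant takes every integer value ≤ 4 on cluster-positive triples coming from integer skew-symmetrizable matrices. -/
theorem stmt_18 (n : ℤ) (hn : n ≤ 4) :
    let p : ℝ := Real.sqrt (5 * (5 - (n : ℝ)))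
    let q : ℝ := 2 * Real.sqrt (5 - (n : ℝ))
    let r : ℝ := Real.sqrt 5
    p ^ 2 = 5 * (5 - (n : ℝ)) ∧ q ^ 2 = 4 * (5 - (n : ℝ)) ∧ r ^ 2 = 5 ∧
    p * q * r = 10 * (5 - (n : ℝ)) ∧
    2 ≤ p ∧ 2 ≤ q ∧ 2 ≤ r ∧
    p ^ 2 + q ^ 2 + r ^ 2 - p * q * r = (n : ℝ) := by
  intro p q r
  have hn' : (n : ℝ) ≤ 4 := by exact_mod_cast hn
  have h1 : (1 : ℝ) ≤ 5 - (n : ℝ) := by linarith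
  have h0 : (0 : ℝ) ≤ 5 - (n : ℝ) := by linarith
  have hp2 : p ^ 2 = 5 * (5 - (n : ℝ)) := Real.sq_sqrt (by linarith)
  have hqs : Real.sqrt (5 - (n : ℝ)) ^ 2 = 5 - (n : ℝ) := Real.sq_sqrt h0
  have hq2 : q ^ 2 = 4 * (5 - (n : ℝ)) := by
    show (2 * Real.sqrt (5 - (n : ℝ))) ^ 2 = _
    rw [mul_pow, hqs]; ring
  have hr2 : r ^ 2 = (5 : ℝ) := Real.sq_sqrt (by norm_num)
  have hp : p = Real.sqrt 5 * Real.sqrt (5 - (n : ℝ)) := by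
    rw [show p = Real.sqrt (5 * (5 - (n : ℝ))) from rfl,
      Real.sqrt_mul (by norm_num)]
  have hpqr : p * q * r = 10 * (5 - (n : ℝ)) := by
    rw [hp]
    show Real.sqrt 5 * Real.sqrt (5 - (n : ℝ)) * (2 * Real.sqrt (5 - (n : ℝ))) * Real.sqrt 5 = _
    have h5 : Real.sqrt 5 * Real.sqrt 5 = 5 := Real.mul_self_sqrt (by norm_num)
    have h6 : Real.sqrt (5 - (n : ℝ)) * Real.sqrt (5 - (n : ℝ)) = 5 - (n : ℝ) :=
      Real.mul_self_sqrt h0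
    nlinarith [h5, h6]
  have hq1 : (1 : ℝ) ≤ Real.sqrt (5 - (n : ℝ)) := by
    rw [show (1:ℝ) = Real.sqrt 1 by simp]
    exact Real.sqrt_le_sqrt h1
  have hpge : 2 ≤ p := by
    rw [show (2:ℝ) = Real.sqrt 4 by
      rw [show (4:ℝ) = 2^2 by norm_num, Real.sqrt_sq (by norm_num)]]
    exact Real.sqrt_le_sqrt (by linarith)
  have hqge : 2 ≤ q := by
    show 2 ≤ 2 * Real.sqrt (5 - (n : ℝ)); linarith
  have hrge : 2 ≤ r := by
    rw [show (2:ℝ) = Real.sqrt 4 by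
      rw [show (4:ℝ) = 2^2 by norm_num, Real.sqrt_sq (by norm_num)]]
    exact Real.sqrt_le_sqrt (by norm_num)
  refine ⟨hp2, hq2, hr2, hpqr, hpge, hqge, hrge, ?_⟩
  rw [hp2, hq2, hr2, hpqr]; ring
end

section
/- Let C < 4 be a real number and let p ≥ q ≥ r > 0 with pqr ≥ 2p², pqr ≥ 2q², pqr ≥ 2r² (condition (M1)) and p² + q² + r² - pqr = C. Then r > 2 and p ≤ r·√((r² - C)/(r² - 4)). -/
theorem stmt_19 (C p q r : ℝ) (hC : C < 4)
    (hr : 0 < r) (hqr : r ≤ q) (hpq : q ≤ p)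
    (h1 : 2 * p ^ 2 ≤ p * q * r) (h2 : 2 * q ^ 2 ≤ p * q * r)
    (h3 : 2 * r ^ 2 ≤ p * q * r)
    (hMC : p ^ 2 + q ^ 2 + r ^ 2 - p * q * r = C) :
    2 < r ∧ p ≤ r * Real.sqrt ((r ^ 2 - C) / (r ^ 2 - 4)) := by
  have hq : 0 < q := lt_of_lt_of_le hr hqr
  have hp : 0 < p := lt_of_lt_of_le hq hpq
  have h2p : 2 * p ≤ q * r := by
    have := mul_le_mul_of_nonneg_right hpq hr.le
    nlinarith
  have hr2 : 2 ≤ r := by nlinarith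
  have hrgt : 2 < r := by
    rcases lt_or_eq_of_le hr2 with h | h
    · exact h
    · exfalso; nlinarith [sq_nonneg (p - q)]
  refine ⟨hrgt, ?_⟩
  have hden : 0 < r ^ 2 - 4 := by nlinarith
  have hqle : q * r ≤ p * (r ^ 2 - 2) := by nlinarith
  have hkey : p ^ 2 * (r ^ 2 - 4) ≤ r ^ 2 * (r ^ 2 - C) := by
    nlinarith [mul_nonneg (sub_nonneg.2 h2p) (sub_nonneg.2 hqle)]
  have hX : p ^ 2 ≤ r ^ 2 * ((r ^ 2 - C) / (r ^ 2 - 4)) := by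
    rw [mul_div_assoc', le_div_iff₀ hden]; nlinarith
  have := Real.sqrt_le_sqrt hX
  rwa [Real.sqrt_sq hp.le, Real.sqrt_mul (by positivity), Real.sqrt_sq hr.le] at this
end
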